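/- arXiv:1707.01620 — 4 statements merged into one kernel-verified Lean document; each statement's English description precedes it below -/
import Mathlib

section
/- Let C be a pretriangulated category, α : Y → X and β : Z → Y with α ∘ β = 0. Fix distinguished triangles Z →β Y →i_β Cβ →∂_β Z[1] and Y →α X →i_α Cα →∂_α Y[1]. Given any extension f : Cβ → X with f ∘ i_β = α, there exists a co-extension g : Z[1] → Cα with ∂_α ∘ g = -β[1] such that g ∘ ∂_β = i_α ∘ f as morphisms Cβ → Cα. -/
open CategoryTheory Category Limits Pretriangulated

/-- The co-extension is the third component of a morphism, extending `(𝟙 Y, f)`, from the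
rotation `Y → Cβ → Z[1] → Y[1]` of the triangle on `β` to the triangle on `α` (axiom TR3). -/
theorem coextension_compatible_with_extension {C : Type*} [Category C] [HasZeroObject C]
    [HasShift C ℤ] [Preadditive C] [∀ n : ℤ, (shiftFunctor C n).Additive] [Pretriangulated C]
    {X Y Z Cα Cβ : C} (α : Y ⟶ X) (β : Z ⟶ Y) (hαβ : β ≫ α = 0)
    (iβ : Y ⟶ Cβ) (dβ : Cβ ⟶ Z⟦(1 : ℤ)⟧)
    (hTβ : Triangle.mk β iβ dβ ∈ distTriang C)
    (iα : X ⟶ Cα) (dα : Cα ⟶ Y⟦(1 : ℤ)⟧)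
    (hTα : Triangle.mk α iα dα ∈ distTriang C)
    (f : Cβ ⟶ X) (hf : iβ ≫ f = α) :
    ∃ g : Z⟦(1 : ℤ)⟧ ⟶ Cα, g ≫ dα = -β⟦(1 : ℤ)⟧' ∧ dβ ≫ g = f ≫ iα := by
  obtain ⟨g, hg_square, hg_shift⟩ := complete_distinguished_triangle_morphism
    (Triangle.mk β iβ dβ).rotate (Triangle.mk α iα dα)
    (rot_of_distTriang _ hTβ) hTα (𝟙 Y) f (hf.trans (id_comp α).symm)
  exact ⟨g, hg_shift.symm.trans (show (-β⟦(1 : ℤ)⟧') ≫ (𝟙 Y)⟦(1 : ℤ)⟧' = _ by simp), hg_square⟩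
end

section
/- Let C be a pretriangulated category, α : Y → X and β : Z → Y with α ∘ β = 0, with triangles as above. The set of morphisms Cβ → Cα of the form g ∘ ∂_β, where g ranges over co-extensions of β through Cα, equals the set of morphisms of the form i_α ∘ f, where f ranges over extensions of α over Cβ. -/
open CategoryTheory Category Limits Pretriangulated

/-!
The rotation `Y → Cβ → Z⟦1⟧ → Y⟦1⟧` of the triangle of `β` and the triangle of `α` both start
at `Y`, and a morphism between them over `𝟙 Y` is a triple `(𝟙 Y, f, g)` with `f` an extension
of `α` and `g` a co-extension of `β`, whose middle square says `dβ ≫ g = f ≫ iα`. By the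
completion axiom such a morphism exists as soon as either `f` or `g` is given.
-/

namespace CategoryTheory.Pretriangulated

variable {C : Type*} [Category C] [HasZeroObject C] [HasShift C ℤ] [Preadditive C]
  [∀ n : ℤ, (shiftFunctor C n).Additive] [Pretriangulated C]

theorem exists_hom₃_iff_exists_hom₂ (T₁ T₂ : Triangle C) (hT₁ : T₁ ∈ distTriang C)
    (hT₂ : T₂ ∈ distTriang C) (a : T₁.obj₁ ⟶ T₂.obj₁) (φ : T₁.obj₂ ⟶ T₂.obj₃) :
    (∃ c : T₁.obj₃ ⟶ T₂.obj₃, T₁.mor₃ ≫ a⟦(1 : ℤ)⟧' = c ≫ T₂.mor₃ ∧ φ = T₁.mor₂ ≫ c) ↔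
      ∃ b : T₁.obj₂ ⟶ T₂.obj₂, T₁.mor₁ ≫ b = a ≫ T₂.mor₁ ∧ φ = b ≫ T₂.mor₂ := by
  constructor
  · rintro ⟨c, hc, rfl⟩
    exact complete_distinguished_triangle_morphism₂ T₁ T₂ hT₁ hT₂ a c hc
  · rintro ⟨b, hb, rfl⟩
    obtain ⟨c, hc₁, hc₂⟩ := complete_distinguished_triangle_morphism T₁ T₂ hT₁ hT₂ a b hb
    exact ⟨c, hc₂, hc₁.symm⟩

end CategoryTheory.Pretriangulated

/-- Lemma 5.1, full set equality: the set of composites `g ∘ ∂_β`,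
for `g` ranging over co-extensions of `β` through `Cα`, equals the set of
composites `i_α ∘ f`, for `f` ranging over extensions of `α` over `Cβ`. -/
theorem coextension_set_eq_extension_set {C : Type*} [Category C] [HasZeroObject C]
    [HasShift C ℤ] [Preadditive C] [∀ n : ℤ, (shiftFunctor C n).Additive] [Pretriangulated C]
    {X Y Z Cα Cβ : C} (α : Y ⟶ X) (β : Z ⟶ Y) (hαβ : β ≫ α = 0)
    (iβ : Y ⟶ Cβ) (dβ : Cβ ⟶ Z⟦(1 : ℤ)⟧)
    (hTβ : Triangle.mk β iβ dβ ∈ distTriang C)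
    (iα : X ⟶ Cα) (dα : Cα ⟶ Y⟦(1 : ℤ)⟧)
    (hTα : Triangle.mk α iα dα ∈ distTriang C) :
    {φ : Cβ ⟶ Cα | ∃ g : Z⟦(1 : ℤ)⟧ ⟶ Cα, g ≫ dα = -β⟦(1 : ℤ)⟧' ∧ φ = dβ ≫ g} =
      {φ : Cβ ⟶ Cα | ∃ f : Cβ ⟶ X, iβ ≫ f = α ∧ φ = f ≫ iα} := by
  ext φ
  have key : (∃ g : Z⟦(1 : ℤ)⟧ ⟶ Cα, (-β⟦(1 : ℤ)⟧') ≫ (𝟙 Y)⟦(1 : ℤ)⟧' = g ≫ dα ∧ φ = dβ ≫ g) ↔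
      ∃ f : Cβ ⟶ X, iβ ≫ f = 𝟙 Y ≫ α ∧ φ = f ≫ iα :=
    exists_hom₃_iff_exists_hom₂ _ (Triangle.mk α iα dα) (rot_of_distTriang _ hTβ) hTα (𝟙 Y) φ
  simpa only [CategoryTheory.Functor.map_id, comp_id, id_comp, Set.mem_ofPred_eq,
    eq_comm (a := _ ≫ dα)] using key
end

section
/- Let C be a pretriangulated category and W →γ Z →β Y →α X morphisms with α ∘ β = 0 and β ∘ γ = 0. Fix distinguished triangles on α, β, γ with cofibers Cα, Cβ, Cγ. Then for any choices of an extension f : Cβ → X of α and a co-extension g' : W[1] → Cβ of γ, there exist a co-extension g : Z[1] → Cα of β such that -g ∘ γ[1] = i_α ∘ f ∘ g' as morphisms W[1] → Cα. -/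
/-!
Compare `rot Tγ = (Z → Cγ → W⟦1⟧ → Z⟦1⟧)` with `Tβ`: the identity of `Z` and `g'` complete to a
map `a : Cγ ⟶ Y` extending `β` with `dγ ≫ g' = a ≫ iβ`. Then `a` and `g' ≫ f` form a commutative
square from `rot² Tγ` to `Tα`, and the completing map `g : Z⟦1⟧ ⟶ Cα` is the required
co-extension of `β`.
-/

open CategoryTheory Category Limits Pretriangulated

namespace CategoryTheory.Pretriangulated

variable {C : Type*} [Category C] [HasZeroObject C] [HasShift C ℤ] [Preadditive C]
  [∀ n : ℤ, (shiftFunctor C n).Additive] [Pretriangulated C]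

lemma exists_extension_of_coextension {W Y Z Cβ Cγ : C} {β : Z ⟶ Y} {γ : W ⟶ Z}
    {iβ : Y ⟶ Cβ} {dβ : Cβ ⟶ Z⟦(1 : ℤ)⟧} (hTβ : Triangle.mk β iβ dβ ∈ distTriang C)
    {iγ : Z ⟶ Cγ} {dγ : Cγ ⟶ W⟦(1 : ℤ)⟧} (hTγ : Triangle.mk γ iγ dγ ∈ distTriang C)
    {g' : W⟦(1 : ℤ)⟧ ⟶ Cβ} (hg' : g' ≫ dβ = -γ⟦(1 : ℤ)⟧') :
    ∃ a : Cγ ⟶ Y, iγ ≫ a = β ∧ dγ ≫ g' = a ≫ iβ := by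
  obtain ⟨a, ha₁, ha₂⟩ := complete_distinguished_triangle_morphism₂ _ _
    (rot_of_distTriang _ hTγ) hTβ (𝟙 Z) g' (by
      change (-γ⟦(1 : ℤ)⟧') ≫ (𝟙 Z)⟦(1 : ℤ)⟧' = g' ≫ dβ
      simp [hg'])
  -- `simp` does not see through the projections of `Triangle.mk` and its rotations.
  change iγ ≫ a = 𝟙 Z ≫ β at ha₁
  exact ⟨a, ha₁.trans (id_comp β), ha₂⟩

lemma exists_hom_of_rotate_rotate {W X Y Z Cα Cγ : C} {α : Y ⟶ X} {γ : W ⟶ Z}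
    {iα : X ⟶ Cα} {dα : Cα ⟶ Y⟦(1 : ℤ)⟧} (hTα : Triangle.mk α iα dα ∈ distTriang C)
    {iγ : Z ⟶ Cγ} {dγ : Cγ ⟶ W⟦(1 : ℤ)⟧} (hTγ : Triangle.mk γ iγ dγ ∈ distTriang C)
    (a : Cγ ⟶ Y) (b : W⟦(1 : ℤ)⟧ ⟶ X) (comm : dγ ≫ b = a ≫ α) :
    ∃ g : Z⟦(1 : ℤ)⟧ ⟶ Cα, g ≫ dα = -(iγ ≫ a)⟦(1 : ℤ)⟧' ∧ -(γ⟦(1 : ℤ)⟧' ≫ g) = b ≫ iα := by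
  obtain ⟨g, hg₁, hg₂⟩ := complete_distinguished_triangle_morphism _ _
    (rot_of_distTriang _ (rot_of_distTriang _ hTγ)) hTα a b comm
  change (-γ⟦(1 : ℤ)⟧') ≫ g = b ≫ iα at hg₁
  change (-iγ⟦(1 : ℤ)⟧') ≫ a⟦(1 : ℤ)⟧' = g ≫ dα at hg₂
  exact ⟨g, hg₂.symm.trans ((Preadditive.neg_comp _ _).trans (by rw [Functor.map_comp])),
    (Preadditive.neg_comp _ _).symm.trans hg₁⟩

end CategoryTheory.Pretriangulated

/-- Lemma 5.2, one containment: for any extension `f : Cβ ⟶ X` of `α`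
and any co-extension `g' : W⟦1⟧ ⟶ Cβ` of `γ`, there is a co-extension `g : Z⟦1⟧ ⟶ Cα`
of `β` such that `-g ∘ γ⟦1⟧ = i_α ∘ f ∘ g'`. -/
theorem lemma52_containment {C : Type*} [Category C] [HasZeroObject C]
    [HasShift C ℤ] [Preadditive C] [∀ n : ℤ, (shiftFunctor C n).Additive] [Pretriangulated C]
    {W X Y Z Cα Cβ Cγ : C} (α : Y ⟶ X) (β : Z ⟶ Y) (γ : W ⟶ Z)
    (hαβ : β ≫ α = 0) (hβγ : γ ≫ β = 0)
    (iα : X ⟶ Cα) (dα : Cα ⟶ Y⟦(1 : ℤ)⟧)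
    (hTα : Triangle.mk α iα dα ∈ distTriang C)
    (iβ : Y ⟶ Cβ) (dβ : Cβ ⟶ Z⟦(1 : ℤ)⟧)
    (hTβ : Triangle.mk β iβ dβ ∈ distTriang C)
    (iγ : Z ⟶ Cγ) (dγ : Cγ ⟶ W⟦(1 : ℤ)⟧)
    (hTγ : Triangle.mk γ iγ dγ ∈ distTriang C)
    (f : Cβ ⟶ X) (hf : iβ ≫ f = α)
    (g' : W⟦(1 : ℤ)⟧ ⟶ Cβ) (hg' : g' ≫ dβ = -γ⟦(1 : ℤ)⟧') :
    ∃ g : Z⟦(1 : ℤ)⟧ ⟶ Cα, g ≫ dα = -β⟦(1 : ℤ)⟧' ∧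
      -(γ⟦(1 : ℤ)⟧' ≫ g) = g' ≫ f ≫ iα := by
  obtain ⟨a, haβ, ha⟩ := exists_extension_of_coextension hTβ hTγ hg'
  have comm : dγ ≫ g' ≫ f = a ≫ α := by rw [reassoc_of% ha, hf]
  obtain ⟨g, hgd, hgγ⟩ := exists_hom_of_rotate_rotate hTα hTγ a (g' ≫ f) comm
  exact ⟨g, by rw [hgd, haβ], by rw [hgγ, assoc]⟩
end

section
/- Let C be a pretriangulated category with W →γ Z →β Y →α X satisfying α ∘ β = 0 and β ∘ γ = 0, with distinguished triangles on α, β, γ as above. The coset of morphisms W[1] → Cα of the form -g ∘ γ[1] (g ranging over co-extensions of β through Cα) and the coset i_α ∘ f ∘ g' (f ranging over extensions of α over Cβ, g' over co-extensions of γ through Cβ) have the same indeterminacy, namely i_α ∘ Hom(Z[1], X) ∘ γ[1]. -/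
/-!
In a distinguished triangle `P → Q → R → P⟦1⟧`, two co-extensions `V → R` of the same map
`V → P⟦1⟧` differ by a map factoring through `Q → R`, and two extensions `R → X` of the same map
`Q → X` differ by a map factoring through `R → P⟦1⟧`: this is exactness of the (co)Yoneda
sequences. Applied to the triangle on `α`, the first fact is the indeterminacy of
`-L^α β ∘ γ⟦1⟧`. In `i_α ∘ f ∘ g'`, changing `g'` by `i_β ∘ u` costs `i_α ∘ α ∘ u = 0`, while
changing `f` by `k ∘ ∂_β` costs `i_α ∘ k ∘ ∂_β ∘ g' = -i_α ∘ k ∘ γ⟦1⟧`. Conversely both cosets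
absorb the indeterminacy because `∂_α ∘ i_α = 0` and `∂_β ∘ i_β = 0`.
-/

open CategoryTheory Category Limits Pretriangulated

namespace CategoryTheory.Pretriangulated.Triangle

variable {C : Type*} [Category C] [Preadditive C] [HasZeroObject C] [HasShift C ℤ]
  [∀ n : ℤ, (CategoryTheory.shiftFunctor C n).Additive] [Pretriangulated C]
  {T : Triangle C}

open Preadditive

lemma exists_eq_add_comp_mor₂_of_comp_mor₃_eq (hT : T ∈ distTriang C) {X : C}
    {g g' : X ⟶ T.obj₃} (h : g ≫ T.mor₃ = g' ≫ T.mor₃) :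
    ∃ u : X ⟶ T.obj₂, g = g' + u ≫ T.mor₂ := by
  obtain ⟨u, hu⟩ := T.coyoneda_exact₃ hT (g - g') (by rw [sub_comp, h, sub_self])
  exact ⟨u, by rw [← hu, add_sub_cancel]⟩

lemma exists_eq_add_mor₃_comp_of_mor₂_comp_eq (hT : T ∈ distTriang C) {X : C}
    {f f' : T.obj₃ ⟶ X} (h : T.mor₂ ≫ f = T.mor₂ ≫ f') :
    ∃ k : T.obj₁⟦(1 : ℤ)⟧ ⟶ X, f = f' + T.mor₃ ≫ k := by
  obtain ⟨k, hk⟩ := T.yoneda_exact₃ hT (f - f') (by rw [comp_sub, h, sub_self])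
  exact ⟨k, by rw [← hk, add_sub_cancel]⟩

lemma exists_comp_comp_sub_comp_comp_eq (hT : T ∈ distTriang C) {V X P : C}
    {b : V ⟶ T.obj₁⟦(1 : ℤ)⟧} {g g' : V ⟶ T.obj₃} (hg : g ≫ T.mor₃ = b) (hg' : g' ≫ T.mor₃ = b)
    {a : T.obj₂ ⟶ X} {f f' : T.obj₃ ⟶ X} (hf : T.mor₂ ≫ f = a) (hf' : T.mor₂ ≫ f' = a)
    {i : X ⟶ P} (hai : a ≫ i = 0) :
    ∃ k : T.obj₁⟦(1 : ℤ)⟧ ⟶ X, g ≫ f ≫ i - g' ≫ f' ≫ i = b ≫ k ≫ i := by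
  obtain ⟨k, rfl⟩ := exists_eq_add_mor₃_comp_of_mor₂_comp_eq hT (hf.trans hf'.symm)
  obtain ⟨u, rfl⟩ := exists_eq_add_comp_mor₂_of_comp_mor₃_eq hT (hg.trans hg'.symm)
  refine ⟨k, ?_⟩
  simp only [← hg', add_comp, comp_add, assoc, reassoc_of% hf', hai, comp_zero,
    comp_distTriang_mor_zero₂₃_assoc _ hT, zero_comp, add_zero, add_sub_cancel_left]

end CategoryTheory.Pretriangulated.Triangle

/-- Lemma 5.2, indeterminacies: the set `-L^α β ∘ γ⟦1⟧` and the set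
`i_α ∘ L_β α ∘ L^β γ` in `Hom(W⟦1⟧, Cα)` both have indeterminacy exactly
`i_α ∘ Hom(Z⟦1⟧, X) ∘ γ⟦1⟧`: differences of any two elements of either set lie in
this subgroup, and either set is stable under adding elements of this subgroup. -/
theorem lemma52_indeterminacy {C : Type*} [Category C] [HasZeroObject C]
    [HasShift C ℤ] [Preadditive C] [∀ n : ℤ, (shiftFunctor C n).Additive] [Pretriangulated C]
    {W X Y Z Cα Cβ : C} (α : Y ⟶ X) (β : Z ⟶ Y) (γ : W ⟶ Z)
    (hαβ : β ≫ α = 0) (hβγ : γ ≫ β = 0)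
    (iα : X ⟶ Cα) (dα : Cα ⟶ Y⟦(1 : ℤ)⟧)
    (hTα : Triangle.mk α iα dα ∈ distTriang C)
    (iβ : Y ⟶ Cβ) (dβ : Cβ ⟶ Z⟦(1 : ℤ)⟧)
    (hTβ : Triangle.mk β iβ dβ ∈ distTriang C) :
    -- the two cosets in `Hom(W⟦1⟧, Cα)`
    (let A : Set (W⟦(1 : ℤ)⟧ ⟶ Cα) :=
      {φ | ∃ g : Z⟦(1 : ℤ)⟧ ⟶ Cα, g ≫ dα = -β⟦(1 : ℤ)⟧' ∧ φ = -(γ⟦(1 : ℤ)⟧' ≫ g)}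
    let B : Set (W⟦(1 : ℤ)⟧ ⟶ Cα) :=
      {φ | ∃ (f : Cβ ⟶ X) (g' : W⟦(1 : ℤ)⟧ ⟶ Cβ),
        iβ ≫ f = α ∧ g' ≫ dβ = -γ⟦(1 : ℤ)⟧' ∧ φ = g' ≫ f ≫ iα}
    -- the common indeterminacy `i_α ∘ Hom(Z⟦1⟧, X) ∘ γ⟦1⟧`
    let S : Set (W⟦(1 : ℤ)⟧ ⟶ Cα) :=
      {φ | ∃ h : Z⟦(1 : ℤ)⟧ ⟶ X, φ = γ⟦(1 : ℤ)⟧' ≫ h ≫ iα}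
    (∀ a ∈ A, ∀ a' ∈ A, a - a' ∈ S) ∧ (∀ a ∈ A, ∀ s ∈ S, a + s ∈ A) ∧
      (∀ b ∈ B, ∀ b' ∈ B, b - b' ∈ S) ∧ (∀ b ∈ B, ∀ s ∈ S, b + s ∈ B)) := by
  intro A B S
  have hαiα : α ≫ iα = 0 := comp_distTriang_mor_zero₁₂ _ hTα
  have hiαdα : iα ≫ dα = 0 := comp_distTriang_mor_zero₂₃ _ hTα
  have hiβdβ : iβ ≫ dβ = 0 := comp_distTriang_mor_zero₂₃ _ hTβ
  refine ⟨?_, ?_, ?_, ?_⟩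
  · rintro _ ⟨g, hg, rfl⟩ _ ⟨g', hg', rfl⟩
    obtain ⟨u, rfl⟩ : ∃ u : Z⟦(1 : ℤ)⟧ ⟶ X, g = g' + u ≫ iα :=
      Triangle.exists_eq_add_comp_mor₂_of_comp_mor₃_eq hTα (hg.trans hg'.symm)
    exact ⟨-u, by simp only [Preadditive.comp_add, Preadditive.neg_comp, Preadditive.comp_neg,
      neg_add, add_sub_cancel_left]⟩
  · rintro _ ⟨g, hg, rfl⟩ _ ⟨h, rfl⟩
    refine ⟨g - h ≫ iα, ?_, by rw [Preadditive.comp_sub, neg_sub, sub_eq_neg_add]⟩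
    rw [Preadditive.sub_comp, assoc, hiαdα, comp_zero, sub_zero, hg]
  · rintro _ ⟨f, g, hf, hg, rfl⟩ _ ⟨f', g', hf', hg', rfl⟩
    obtain ⟨k, hk⟩ : ∃ k : Z⟦(1 : ℤ)⟧ ⟶ X, g ≫ f ≫ iα - g' ≫ f' ≫ iα = (-γ⟦(1 : ℤ)⟧') ≫ k ≫ iα :=
      Triangle.exists_comp_comp_sub_comp_comp_eq hTβ hg hg' hf hf' hαiα
    refine ⟨-k, ?_⟩
    simp only [hk, Preadditive.neg_comp, Preadditive.comp_neg]
  · rintro _ ⟨f, g, hf, hg, rfl⟩ _ ⟨h, rfl⟩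
    refine ⟨f - dβ ≫ h, g, ?_, hg, ?_⟩
    · rw [Preadditive.comp_sub, hf, ← assoc, hiβdβ, zero_comp, sub_zero]
    · rw [Preadditive.sub_comp, Preadditive.comp_sub, assoc, reassoc_of% hg]
      simp only [Preadditive.neg_comp, sub_neg_eq_add]
end
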